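/- Under the hypotheses of the previous statement, the coboundary satisfies the quantitative bound ‖δΞ_{s,u,t}‖ ≤ C' Σ_{k=0}^{n−1} c(s,u)^{(n−k)/p} c(u,t)^{(k+1)/p}, and for every k the exponents sum to (n+1)/p > 1, where n = ⌊p⌋. -/

import Mathlib

/-!
Chen's relation splits `𝕏^{k+1}_{s,t}` into `𝕏^{k+1}_{s,u}` plus the mixed products
`𝕏^{k-j}_{s,u} 𝕏^{j+1}_{u,t}`. After exchanging the order of summation, the controlled expansion
of `Y^j_u` absorbs all mixed terms, leaving `δΞ_{s,u,t} = -Σ_k R^k_{s,u} 𝕏^{k+1}_{u,t}`, which is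
bounded term by term. The exponents of each term add up to `(⌊p⌋ + 1)/p > 1`.
-/

open Finset

section Coboundary

variable {A W F : Type*} [Ring A] [AddCommGroup W] [FunLike F A W] [AddMonoidHomClass F A W]

theorem map_chen_succ (Y : F) (xst xsu xut : ℕ → A) (hone : xut 0 = 1)
    (hchen : ∀ k, xst k = ∑ j ∈ range (k + 1), xsu (k - j) * xut j) (k : ℕ) :
    Y (xst (k + 1)) = Y (xsu (k + 1)) + ∑ j ∈ range (k + 1), Y (xsu (k - j) * xut (j + 1)) := by
  rw [hchen, sum_range_succ', Nat.sub_zero, hone, mul_one, map_add, map_sum, add_comm]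
  simp only [Nat.succ_sub_succ]

theorem sum_range_sum_range_succ_eq_sum_range_sum_Icc (n : ℕ) (f : ℕ → ℕ → W) :
    ∑ k ∈ range n, ∑ j ∈ range (k + 1), f k j = ∑ j ∈ range n, ∑ k ∈ Icc j (n - 1), f k j :=
  sum_comm' fun k j => by simp only [mem_range, mem_Icc]; omega

/-- `xst`, `xsu`, `xut` are the levels of the path over `[s,t]`, `[s,u]`, `[u,t]`. -/
theorem coboundary_eq_neg_sum_remainder (n : ℕ) (xst xsu xut : ℕ → A) (Ys Yu R : ℕ → F)
    (hone : xut 0 = 1) (hchen : ∀ k, xst k = ∑ j ∈ range (k + 1), xsu (k - j) * xut j)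
    (hctrl : ∀ k < n, ∀ a, Yu k a = (∑ j ∈ Icc k (n - 1), Ys j (xsu (j - k) * a)) + R k a) :
    (∑ k ∈ range n, Ys k (xst (k + 1))) - (∑ k ∈ range n, Ys k (xsu (k + 1))) -
        (∑ k ∈ range n, Yu k (xut (k + 1))) = -∑ k ∈ range n, R k (xut (k + 1)) := by
  have hmixed : ∀ j ∈ range n, ∑ k ∈ Icc j (n - 1), Ys k (xsu (k - j) * xut (j + 1)) =
      Yu j (xut (j + 1)) - R j (xut (j + 1)) := fun j hj => by
    rw [hctrl j (mem_range.mp hj), add_sub_cancel_right]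
  rw [sum_congr rfl fun k _ => map_chen_succ (Ys k) xst xsu xut hone hchen k, sum_add_distrib,
    sum_range_sum_range_succ_eq_sum_range_sum_Icc, sum_congr rfl hmixed, sum_sub_distrib]
  abel

end Coboundary

theorem norm_sum_apply_le_mul_sum_mul {ι 𝕜 E G : Type*} [NontriviallyNormedField 𝕜]
    [SeminormedAddCommGroup E] [NormedSpace 𝕜 E] [SeminormedAddCommGroup G] [NormedSpace 𝕜 G]
    (s : Finset ι) (f : ι → E →L[𝕜] G) (x : ι → E) (a b : ι → ℝ) (C D : ℝ)
    (hf : ∀ k ∈ s, ‖f k‖ ≤ C * a k) (hx : ∀ k ∈ s, ‖x k‖ ≤ D * b k) :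
    ‖∑ k ∈ s, f k (x k)‖ ≤ C * D * ∑ k ∈ s, a k * b k := by
  calc ‖∑ k ∈ s, f k (x k)‖
      ≤ ∑ k ∈ s, ‖f k‖ * ‖x k‖ := norm_sum_le_of_le s fun k _ => (f k).le_opNorm (x k)
    _ ≤ ∑ k ∈ s, (C * a k) * (D * b k) := sum_le_sum fun k hk =>
        mul_le_mul (hf k hk) (hx k hk) (norm_nonneg _) ((norm_nonneg _).trans (hf k hk))
    _ = C * D * ∑ k ∈ s, a k * b k := by
        rw [mul_sum]
        exact sum_congr rfl fun k _ => by ring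

theorem one_lt_natFloor_add_one_div {p : ℝ} (hp : 0 < p) : 1 < ((⌊p⌋₊ : ℝ) + 1) / p := by
  rw [one_lt_div hp]
  exact Nat.lt_floor_add_one p

theorem stmt9_general {A W : Type*} [NormedCommRing A] [NormedAlgebra ℝ A]
    [NormedAddCommGroup W] [NormedSpace ℝ W]
    (T p : ℝ) (hp : 1 ≤ p) (n : ℕ) (hn : n = ⌊p⌋₊)
    (c : ℝ → ℝ → ℝ)
    (𝕏 : ℕ → ℝ → ℝ → A) (Y : ℕ → ℝ → (A →L[ℝ] W)) (R : ℕ → ℝ → ℝ → (A →L[ℝ] W))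
    (hone : ∀ s t, 0 ≤ s → s ≤ t → t ≤ T → 𝕏 0 s t = 1)
    (hchen : ∀ k, ∀ s u t, 0 ≤ s → s ≤ u → u ≤ t → t ≤ T →
      𝕏 k s t = ∑ j ∈ Finset.range (k + 1), 𝕏 (k - j) s u * 𝕏 j u t)
    (hctrl : ∀ k, k < n → ∀ s u, 0 ≤ s → s ≤ u → u ≤ T → ∀ a : A,
      Y k u a = (∑ j ∈ Finset.Icc k (n - 1), Y j s (𝕏 (j - k) s u * a)) + R k s u a)
    (C : ℝ)
    (hR : ∀ k, k < n → ∀ s u, 0 ≤ s → s ≤ u → u ≤ T →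
      ‖R k s u‖ ≤ C * c s u ^ (((n : ℝ) - (k : ℝ)) / p))
    (h𝕏 : ∀ k, k < n → ∀ u t, 0 ≤ u → u ≤ t → t ≤ T →
      ‖𝕏 (k + 1) u t‖ ≤ C * c u t ^ (((k : ℝ) + 1) / p)) :
    (∃ C' : ℝ, 0 ≤ C' ∧ ∀ s u t, 0 ≤ s → s ≤ u → u ≤ t → t ≤ T →
      ‖(∑ k ∈ Finset.range n, Y k s (𝕏 (k + 1) s t)) -
          (∑ k ∈ Finset.range n, Y k s (𝕏 (k + 1) s u)) -
          (∑ k ∈ Finset.range n, Y k u (𝕏 (k + 1) u t))‖ ≤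
        C' * ∑ k ∈ Finset.range n,
          c s u ^ (((n : ℝ) - (k : ℝ)) / p) * c u t ^ (((k : ℝ) + 1) / p)) ∧
    (∀ k : ℕ, ((n : ℝ) - (k : ℝ)) / p + ((k : ℝ) + 1) / p = ((n : ℝ) + 1) / p) ∧
    1 < ((n : ℝ) + 1) / p := by
  refine ⟨⟨C * C, mul_self_nonneg C, ?_⟩, fun k => by ring, ?_⟩
  · intro s u t hs hsu hut htT
    have hu : 0 ≤ u := hs.trans hsu
    have huT : u ≤ T := hut.trans htT
    rw [coboundary_eq_neg_sum_remainder n (𝕏 · s t) (𝕏 · s u) (𝕏 · u t) (Y · s) (Y · u)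
        (R · s u) (hone u t hu hut htT) (fun k => hchen k s u t hs hsu hut htT)
        (fun k hk => hctrl k hk s u hs hsu huT), norm_neg]
    exact norm_sum_apply_le_mul_sum_mul _ _ _ _ _ C C
      (fun k hk => hR k (mem_range.mp hk) s u hs hsu huT)
      (fun k hk => h𝕏 k (mem_range.mp hk) u t hu hut htT)
  · rw [hn]
    exact one_lt_natFloor_add_one_div (zero_lt_one.trans_le hp)

/-- STATEMENT 8: the algebraic core of the sewing argument for the reduced rough integral.
The symmetric tensor levels are encoded in a commutative normed algebra `A` (products of levels
corresponding to symmetrized tensor products), the levels of the reduced rough path being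
`𝕏 k s t ∈ A` with `𝕏 0 = 1`, and `Y k s, R k s u : A →L[ℝ] W` pairing a level against a
linear functional, so that `Ξ_{s,t} = Σ_{k<n} Y^k_s 𝕏^{k+1}_{s,t}`.  Provided the reduced Chen
relation holds, each `Y^k` satisfies the controlled expansion `Y^k_u = Σ_{j=k}^{n-1} Y^j_s
𝕏^{j-k}_{s,u} + R^k_{s,u}`, and the controlled-path/rough-path norm bounds hold, the coboundary
satisfies `δΞ_{s,u,t} = -Σ_{k<n} R^k_{s,u} ⊗ 𝕏^{k+1}_{u,t}`. -/
theorem stmt9 {A W : Type*} [NormedCommRing A] [NormedAlgebra ℝ A]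
    [NormedAddCommGroup W] [NormedSpace ℝ W]
    (T p : ℝ) (hT : 0 ≤ T) (hp : 1 ≤ p) (n : ℕ) (hn : n = ⌊p⌋₊)
    (c : ℝ → ℝ → ℝ)
    (hc_nonneg : ∀ s t, 0 ≤ s → s ≤ t → t ≤ T → 0 ≤ c s t)
    (hc_diag : ∀ t, 0 ≤ t → t ≤ T → c t t = 0)
    (hc_super : ∀ s u t, 0 ≤ s → s ≤ u → u ≤ t → t ≤ T → c s u + c u t ≤ c s t)
    (𝕏 : ℕ → ℝ → ℝ → A) (Y : ℕ → ℝ → (A →L[ℝ] W)) (R : ℕ → ℝ → ℝ → (A →L[ℝ] W))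
    (hone : ∀ s t, 0 ≤ s → s ≤ t → t ≤ T → 𝕏 0 s t = 1)
    (hchen : ∀ k, ∀ s u t, 0 ≤ s → s ≤ u → u ≤ t → t ≤ T →
      𝕏 k s t = ∑ j ∈ Finset.range (k + 1), 𝕏 (k - j) s u * 𝕏 j u t)
    (hctrl : ∀ k, k < n → ∀ s u, 0 ≤ s → s ≤ u → u ≤ T → ∀ a : A,
      Y k u a = (∑ j ∈ Finset.Icc k (n - 1), Y j s (𝕏 (j - k) s u * a)) + R k s u a)
    (C : ℝ)
    (hR : ∀ k, k < n → ∀ s u, 0 ≤ s → s ≤ u → u ≤ T →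
      ‖R k s u‖ ≤ C * c s u ^ (((n : ℝ) - (k : ℝ)) / p))
    (h𝕏 : ∀ k, k < n → ∀ u t, 0 ≤ u → u ≤ t → t ≤ T →
      ‖𝕏 (k + 1) u t‖ ≤ C * c u t ^ (((k : ℝ) + 1) / p)) :
    (∃ C' : ℝ, 0 ≤ C' ∧ ∀ s u t, 0 ≤ s → s ≤ u → u ≤ t → t ≤ T →
      ‖(∑ k ∈ Finset.range n, Y k s (𝕏 (k + 1) s t)) -
          (∑ k ∈ Finset.range n, Y k s (𝕏 (k + 1) s u)) -
          (∑ k ∈ Finset.range n, Y k u (𝕏 (k + 1) u t))‖ ≤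
        C' * ∑ k ∈ Finset.range n,
          c s u ^ (((n : ℝ) - (k : ℝ)) / p) * c u t ^ (((k : ℝ) + 1) / p)) ∧
    (∀ k : ℕ, ((n : ℝ) - (k : ℝ)) / p + ((k : ℝ) + 1) / p = ((n : ℝ) + 1) / p) ∧
    1 < ((n : ℝ) + 1) / p :=
  stmt9_general T p hp n hn c 𝕏 Y R hone hchen hctrl C hR h𝕏
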